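/- arXiv:1505.06117 — 2 statements merged into one kernel-verified Lean document; each statement's English description precedes it below -/
import Mathlib

section
/- Let K be a number field and S = {P_1, P_2} a set of exactly two primes of O_K. Suppose λ, μ ∈ O_S^* (S-units) with λ + μ = 1. Then at least one of the six pairs (λ, μ), (1/λ, -μ/λ), (1-λ, λ), (1/(1-λ), -λ/(1-λ)), (λ/(λ-1), 1/(1-λ)), ((λ-1)/λ, 1/λ), i.e. some S_3-transform (λ', μ' = 1-λ') of (λ, μ), satisfies λ', μ' ∈ O_K. -/
open IsDedekindDomain NumberField

open Classical in
/-- The normalized additive `P`-adic valuation on a number field `K`. -/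
noncomputable def vP {K : Type*} [Field K] [NumberField K]
    (P : HeightOneSpectrum (𝓞 K)) (x : K) : ℤ :=
  if hx : x = 0 then 0
  else - Multiplicative.toAdd (WithZero.unzero (((P.valuation K).ne_zero_iff).mpr hx))

open scoped Classical in
private theorem assoc_le_of_count_le {α : Type*} [CommMonoidWithZero α] [IsCancelMulZero α]
    [UniqueFactorizationMonoid α] {a b : Associates α} (ha : a ≠ 0) (hb : b ≠ 0)
    (h : ∀ p : Associates α, Irreducible p → p.count a.factors ≤ p.count b.factors) :
    a ≤ b := by
  rw [← Associates.factors_le]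
  obtain ⟨a0, ha0, rfl⟩ := Associates.exists_non_zero_rep ha
  obtain ⟨b0, hb0, rfl⟩ := Associates.exists_non_zero_rep hb
  rw [Associates.factors_mk _ ha0, Associates.factors_mk _ hb0, WithTop.coe_le_coe,
    Multiset.le_iff_count]
  intro p
  have hp := h p.1 p.2
  rwa [Associates.factors_mk _ ha0, Associates.factors_mk _ hb0,
    Associates.count_some p.2, Associates.count_some p.2] at hp

private theorem dvd_of_intVal_le {R : Type*} [CommRing R] [IsDedekindDomain R]
    {r s : R} (hr : r ≠ 0) (hs : s ≠ 0)
    (h : ∀ v : HeightOneSpectrum R, v.intValuationDef r ≤ v.intValuationDef s) : s ∣ r := by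
  rw [← Ideal.span_singleton_le_span_singleton]
  have hspan_r : Ideal.span {r} ≠ (0 : Ideal R) := by
    simpa [Ideal.span_singleton_eq_bot] using hr
  have hspan_s : Ideal.span {s} ≠ (0 : Ideal R) := by
    simpa [Ideal.span_singleton_eq_bot] using hs
  apply Ideal.le_of_dvd
  rw [← Associates.mk_le_mk_iff_dvd]
  apply assoc_le_of_count_le (by simpa using hspan_s) (by simpa using hspan_r)
  intro P hP
  obtain ⟨I, rfl⟩ := Associates.mk_surjective P
  have hI : Irreducible I := Associates.irreducible_mk.mp hP
  have hIprime : Prime I := UniqueFactorizationMonoid.irreducible_iff_prime.mp hI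
  set v : HeightOneSpectrum R := ⟨I, Ideal.isPrime_of_prime hIprime, hIprime.ne_zero⟩
  have hv := h v
  rw [HeightOneSpectrum.intValuationDef_if_neg _ hr, HeightOneSpectrum.intValuationDef_if_neg _ hs,
    WithZero.exp_le_exp, neg_le_neg_iff, Int.ofNat_le] at hv
  convert hv

private theorem isIntegral_of_val_le_one {K : Type*} [Field K] [NumberField K] (x : K)
    (h : ∀ v : HeightOneSpectrum (𝓞 K), v.valuation K x ≤ 1) : IsIntegral ℤ x := by
  by_cases hx : x = 0
  · simpa [hx] using isIntegral_zero
  obtain ⟨r, s, hs, rfl⟩ := IsFractionRing.div_surjective (A := 𝓞 K) x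
  have hsK : algebraMap (𝓞 K) K s ≠ 0 := by
    simpa using nonZeroDivisors.ne_zero hs
  have hr : r ≠ 0 := by
    rintro rfl; simp at hx
  have hdvd : s ∣ r := by
    apply dvd_of_intVal_le hr (nonZeroDivisors.ne_zero hs)
    intro v
    have hv := h v
    rw [map_div₀, HeightOneSpectrum.valuation_of_algebraMap,
      HeightOneSpectrum.valuation_of_algebraMap, HeightOneSpectrum.intValuation_apply,
      HeightOneSpectrum.intValuation_apply, div_eq_mul_inv] at hv
    have hs0 : v.intValuationDef s ≠ 0 := HeightOneSpectrum.intValuation_ne_zero v s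
      (nonZeroDivisors.ne_zero hs)
    calc v.intValuationDef r
        = v.intValuationDef r * (v.intValuationDef s)⁻¹ * v.intValuationDef s := by
          field_simp
      _ ≤ 1 * v.intValuationDef s := mul_le_mul_left hv _
      _ = v.intValuationDef s := one_mul _
  obtain ⟨t, rfl⟩ := hdvd
  have : algebraMap (𝓞 K) K (s * t) / algebraMap (𝓞 K) K s = algebraMap (𝓞 K) K t := by
    rw [map_mul]
    field_simp
  rw [this]
  exact NumberField.RingOfIntegers.isIntegral_coe t

private theorem val_eq_one_of_vP_eq_zero {K : Type*} [Field K] [NumberField K]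
    {Q : HeightOneSpectrum (𝓞 K)} {x : K} (hx : x ≠ 0) (h : vP Q x = 0) :
    Q.valuation K x = 1 := by
  rw [vP, dif_neg hx, neg_eq_zero] at h
  have h1 : WithZero.unzero (((Q.valuation K).ne_zero_iff).mpr hx) = 1 :=
    Multiplicative.toAdd.injective (by simpa using h)
  rw [← WithZero.coe_unzero (((Q.valuation K).ne_zero_iff).mpr hx), h1, WithZero.coe_one]

private theorem inv_le_one'' {G : Type*} [LinearOrderedCommGroupWithZero G] {a : G}
    (ha : a ≠ 0) (h : 1 ≤ a) : a⁻¹ ≤ 1 :=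
  calc a⁻¹ = a⁻¹ * 1 := (mul_one _).symm
    _ ≤ a⁻¹ * a := mul_le_mul_right h _
    _ = 1 := inv_mul_cancel₀ ha

/-- If `|S| = 2`, every solution of the `S`-unit equation has an `S₃`-transform
`(λ', 1 - λ')` consisting of algebraic integers. -/
theorem sUnit_solution_has_integral_transform
    {K : Type*} [Field K] [NumberField K]
    (P₁ P₂ : HeightOneSpectrum (𝓞 K)) (hne : P₁ ≠ P₂)
    (lam mu : K) (hlam : lam ≠ 0) (hmu : mu ≠ 0) (hsum : lam + mu = 1)
    (hS : ∀ Q : HeightOneSpectrum (𝓞 K), Q ≠ P₁ → Q ≠ P₂ → vP Q lam = 0 ∧ vP Q mu = 0) :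
    ∃ lam' ∈ ({lam, 1 / lam, 1 - lam, 1 / (1 - lam),
        lam / (lam - 1), (lam - 1) / lam} : Set K),
      IsIntegral ℤ lam' ∧ IsIntegral ℤ (1 - lam') := by
  have hmu' : mu = 1 - lam := by rw [← hsum]; ring
  have h1lam : (1 : K) - lam ≠ 0 := hmu' ▸ hmu
  have hlamne : ∀ Q : HeightOneSpectrum (𝓞 K), Q.valuation K lam ≠ 0 :=
    fun Q => ((Q.valuation K).ne_zero_iff).mpr hlam
  have h1lamne : ∀ Q : HeightOneSpectrum (𝓞 K), Q.valuation K (1 - lam) ≠ 0 :=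
    fun Q => ((Q.valuation K).ne_zero_iff).mpr h1lam
  have hQ : ∀ Q : HeightOneSpectrum (𝓞 K), Q ≠ P₁ → Q ≠ P₂ →
      Q.valuation K lam = 1 ∧ Q.valuation K (1 - lam) = 1 := by
    intro Q hq1 hq2
    obtain ⟨ha, hb⟩ := hS Q hq1 hq2
    exact ⟨val_eq_one_of_vP_eq_zero hlam ha,
      val_eq_one_of_vP_eq_zero h1lam (by rwa [hmu'] at hb)⟩
  have key : ∀ x : K, (∀ Q : HeightOneSpectrum (𝓞 K), Q.valuation K x ≤ 1) →
      IsIntegral ℤ x ∧ IsIntegral ℤ (1 - x) := by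
    intro x hx
    refine ⟨isIntegral_of_val_le_one x hx, isIntegral_of_val_le_one _ fun Q => ?_⟩
    calc Q.valuation K (1 - x) ≤ max (Q.valuation K 1) (Q.valuation K x) := Valuation.map_sub _ _ _
      _ ≤ 1 := by rw [Valuation.map_one]; exact max_le le_rfl (hx Q)
  have hmax : ∀ Q : HeightOneSpectrum (𝓞 K), Q.valuation K lam ≠ 1 →
      Q.valuation K (1 - lam) = max 1 (Q.valuation K lam) := by
    intro Q hne1
    rw [sub_eq_add_neg]
    rw [Valuation.map_add_of_distinct_val, Valuation.map_one, Valuation.map_neg]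
    rw [Valuation.map_one, Valuation.map_neg]
    exact fun h => hne1 h.symm
  by_cases h1 : P₁.valuation K lam ≤ 1 <;> by_cases h2 : P₂.valuation K lam ≤ 1
  · -- both ≤ 1 : take lam
    refine ⟨lam, Set.mem_insert _ _, key lam fun Q => ?_⟩
    by_cases hq1 : Q = P₁
    · exact hq1 ▸ h1
    by_cases hq2 : Q = P₂
    · exact hq2 ▸ h2
    exact (hQ Q hq1 hq2).1.le
  · -- a₁ ≤ 1, a₂ > 1
    by_cases he : P₁.valuation K lam = 1
    · -- both ≥ 1 : take 1/lam
      refine ⟨1 / lam, Set.mem_insert_of_mem _ (Set.mem_insert _ _), key _ fun Q => ?_⟩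
      rw [one_div, map_inv₀]
      by_cases hq1 : Q = P₁
      · exact inv_le_one'' (hlamne Q) (hq1 ▸ he.ge)
      by_cases hq2 : Q = P₂
      · exact inv_le_one'' (hlamne Q) (hq2 ▸ (not_le.mp h2).le)
      · rw [(hQ Q hq1 hq2).1]; simp
    · -- a₁ < 1, a₂ > 1 : take 1/(1-lam)
      refine ⟨1 / (1 - lam), Set.mem_insert_of_mem _ (Set.mem_insert_of_mem _
        (Set.mem_insert_of_mem _ (Set.mem_insert _ _))), key _ fun Q => ?_⟩
      rw [one_div, map_inv₀]
      by_cases hq1 : Q = P₁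
      · subst hq1
        rw [hmax Q he, max_eq_left h1]
        simp
      by_cases hq2 : Q = P₂
      · subst hq2
        have hne1 : Q.valuation K lam ≠ 1 := fun h => h2 h.le
        rw [hmax Q hne1, max_eq_right (not_le.mp h2).le]
        exact inv_le_one'' (hlamne Q) (not_le.mp h2).le
      · rw [(hQ Q hq1 hq2).2]; simp
  · -- a₁ > 1, a₂ ≤ 1 : symmetric
    by_cases he : P₂.valuation K lam = 1
    · refine ⟨1 / lam, Set.mem_insert_of_mem _ (Set.mem_insert _ _), key _ fun Q => ?_⟩
      rw [one_div, map_inv₀]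
      by_cases hq1 : Q = P₁
      · exact inv_le_one'' (hlamne Q) (hq1 ▸ (not_le.mp h1).le)
      by_cases hq2 : Q = P₂
      · exact inv_le_one'' (hlamne Q) (hq2 ▸ he.ge)
      · rw [(hQ Q hq1 hq2).1]; simp
    · refine ⟨1 / (1 - lam), Set.mem_insert_of_mem _ (Set.mem_insert_of_mem _
        (Set.mem_insert_of_mem _ (Set.mem_insert _ _))), key _ fun Q => ?_⟩
      rw [one_div, map_inv₀]
      by_cases hq1 : Q = P₁
      · subst hq1
        have hne1 : Q.valuation K lam ≠ 1 := fun h => h1 h.le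
        rw [hmax Q hne1, max_eq_right (not_le.mp h1).le]
        exact inv_le_one'' (hlamne Q) (not_le.mp h1).le
      by_cases hq2 : Q = P₂
      · subst hq2
        rw [hmax Q he, max_eq_left h2]
        simp
      · rw [(hQ Q hq1 hq2).2]; simp
  · -- both > 1 : take 1/lam
    refine ⟨1 / lam, Set.mem_insert_of_mem _ (Set.mem_insert _ _), key _ fun Q => ?_⟩
    rw [one_div, map_inv₀]
    by_cases hq1 : Q = P₁
    · exact inv_le_one'' (hlamne Q) (hq1 ▸ (not_le.mp h1).le)
    by_cases hq2 : Q = P₂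
    · exact inv_le_one'' (hlamne Q) (hq2 ▸ (not_le.mp h2).le)
    · rw [(hQ Q hq1 hq2).1]; simp
end

section
/- Let d ≡ 5 (mod 8) be a squarefree integer with d ≥ 13. There are no integers r ≥ 0, v ≠ 0, and η ∈ {1, -1} such that 2^{4r} - d v² = η·2^{2r+2}. -/
/-- For squarefree `d ≥ 13` with `d ≡ 5 (mod 8)`, the equation
`2^{4r} - d·v² = η·2^{2r+2}` (with `η = ±1`) has no solutions with `v ≠ 0`. -/
theorem no_solution_eta_case (d : ℕ) (hd : Squarefree d) (hd13 : 13 ≤ d)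
    (hd5 : d % 8 = 5) :
    ¬ ∃ (r : ℕ) (v : ℤ) (η : ℤ), (η = 1 ∨ η = -1) ∧ v ≠ 0 ∧
      (2 : ℤ) ^ (4 * r) - (d : ℤ) * v ^ 2 = η * 2 ^ (2 * r + 2) := by
  rintro ⟨r, v, η, hη, hv, heq⟩
  have hd13' : (13 : ℤ) ≤ (d : ℤ) := by exact_mod_cast hd13
  have hd5' : (d : ℤ) % 8 = 5 := by omega
  have hsq : ∀ w : ℤ, w ≠ 0 → (1 : ℤ) ≤ w ^ 2 := by
    intro w hw
    have h1 := Int.one_le_abs hw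
    nlinarith [sq_abs w]
  -- case r = 0
  rcases Nat.eq_zero_or_pos r with hr0 | hrpos
  · subst hr0
    simp only [Nat.mul_zero, pow_zero] at heq
    have h1 := hsq v hv
    have h2 : (13 : ℤ) ≤ (d : ℤ) * v ^ 2 := by nlinarith
    rcases hη with h | h <;> subst h <;> norm_num at heq <;> linarith
  -- r ≥ 1 : factor out 2^{2r+2}
  have hfac : (d : ℤ) * v ^ 2 = 2 ^ (2 * r + 2) * (2 ^ (2 * r - 2) - η) := by
    have hexp : 4 * r = (2 * r + 2) + (2 * r - 2) := by omega
    rw [hexp, pow_add] at heq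
    ring_nf
    ring_nf at heq
    linarith
  have hdodd : ¬ (2 : ℤ) ∣ (d : ℤ) := by
    intro ⟨k, hk⟩; omega
  have hcop : IsCoprime ((2:ℤ) ^ (2 * r + 2)) (d : ℤ) :=
    IsCoprime.pow_left (Int.prime_two.coprime_iff_not_dvd.mpr hdodd)
  have hdvd : (2:ℤ) ^ (2 * r + 2) ∣ v ^ 2 := by
    apply hcop.dvd_of_dvd_mul_left
    exact ⟨2 ^ (2 * r - 2) - η, by linarith [hfac]⟩
  have hdvd' : (2:ℤ) ^ (r + 1) ∣ v := by
    have h2 : ((2:ℤ) ^ (r + 1)) ^ 2 ∣ v ^ 2 := by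
      rwa [← pow_mul, show (r+1)*2 = 2*r+2 by ring]
    exact (Int.pow_dvd_pow_iff two_ne_zero).mp h2
  obtain ⟨w, hw⟩ := hdvd'
  have hw0 : w ≠ 0 := by rintro rfl; simp at hw; exact hv hw
  have hkey : (d : ℤ) * w ^ 2 = 2 ^ (2 * r - 2) - η := by
    have hne : ((2:ℤ) ^ (2 * r + 2)) ≠ 0 := by positivity
    apply mul_left_cancel₀ hne
    rw [← hfac, hw, mul_pow, ← pow_mul, show (r+1)*2 = 2*r+2 from by ring]
    ring
  have hw1 : (1 : ℤ) ≤ w ^ 2 := hsq w hw0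
  have h13 : (13 : ℤ) ≤ (d : ℤ) * w ^ 2 := by nlinarith
  -- r = 1 or r = 2: RHS too small
  rcases Nat.lt_or_ge r 3 with hr3 | hr3
  · interval_cases r <;> simp at hkey <;> rcases hη with h | h <;> subst h <;> omega
  -- r ≥ 3: mod 8
  have hpow8 : ∃ t : ℤ, (2:ℤ) ^ (2 * r - 2) = 8 * t := by
    refine ⟨2 ^ (2 * r - 5), ?_⟩
    rw [show (8:ℤ) = 2 ^ 3 by norm_num, ← pow_add]
    congr 1
    omega
  obtain ⟨t, ht⟩ := hpow8
  -- w is odd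
  have hwodd : Odd w := by
    rcases Int.even_or_odd w with he | ho
    · exfalso
      obtain ⟨k, hk⟩ := he
      have h4 : (d:ℤ) * w ^ 2 = 4 * ((d:ℤ) * k ^ 2) := by rw [hk]; ring
      rw [ht] at hkey
      rcases hη with h | h <;> subst h <;> omega
    · exact ho
  obtain ⟨k, hk⟩ := hwodd
  obtain ⟨j, hj⟩ := Int.even_mul_succ_self k
  have hw2 : w ^ 2 = 8 * j + 1 := by
    rw [hk]
    have : k * (k + 1) = 2 * j := by omega
    nlinarith [this]
  rw [hw2, ht] at hkey
  have hring : (d:ℤ) * (8 * j + 1) = 8 * ((d:ℤ) * j) + (d:ℤ) := by ring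
  rw [hring] at hkey
  rcases hη with h | h <;> subst h <;> omega
end
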